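/- Let H be a nontrivial subgroup of G with H ≤ ι_A(A). Then the essential right cosets of H in G are exactly the cosets H·s with s ∈ ι₁(G₁) ∪ ι₂(G₂). -/

import Mathlib

open Monoid

section EssentialCosets

variable {A : Type} [Group A] {Gf : Bool → Type} [∀ i, Group (Gf i)]
  (φ : ∀ i : Bool, A →* Gf i)

/-- `g` lies in the image `ι_i(G_i)` of the `i`-th factor of the pushout. -/
def InFactor (i : Bool) (g : PushoutI φ) : Prop :=
  g ∈ (PushoutI.of (φ := φ) i).range

/-- `L = (g₁, …, g_n)` is a normal decomposition of `g ∈ G = G₁ *_A G₂`: it is a nonempty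
sequence with product `g`, each entry is a nontrivial element of `ι₁(G₁) ∪ ι₂(G₂)`,
consecutive entries do not lie in the same factor, and if `n > 1` then no entry lies in
`ι_A(A)`. -/
def IsNormalDecomp (g : PushoutI φ) (L : List (PushoutI φ)) : Prop :=
  L ≠ [] ∧ L.prod = g ∧
    (∀ x ∈ L, x ≠ 1 ∧ (InFactor φ true x ∨ InFactor φ false x)) ∧
    (∀ n : ℕ, ∀ x y : PushoutI φ, L[n]? = some x → L[n + 1]? = some y →
      ¬ (InFactor φ true x ∧ InFactor φ true y) ∧
      ¬ (InFactor φ false x ∧ InFactor φ false y)) ∧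
    (1 < L.length → ∀ x ∈ L, x ∉ (PushoutI.base φ).range)

/-- The right coset `H·c` is *essential* if either `H·c = H`, or there is `h ∈ H` with a
normal decomposition `(h₁, …, h_n)`, an index `0 ≤ m < n`, and an element `s` of a factor
`ι_i(G_i)` containing `h_{m+1}`, such that `H·c = H·h₁⋯h_m·s`. -/
def IsEssentialCoset (H : Subgroup (PushoutI φ)) (c : PushoutI φ) : Prop :=
  c ∈ H ∨ ∃ (L : List (PushoutI φ)) (m : ℕ) (s : PushoutI φ),
    IsNormalDecomp φ L.prod L ∧ L.prod ∈ H ∧ m < L.length ∧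
    (∃ (i : Bool) (x : PushoutI φ), L[m]? = some x ∧ InFactor φ i x ∧ InFactor φ i s) ∧
    c * ((L.take m).prod * s)⁻¹ ∈ H

/-- The collection of essential right cosets `H·c` of `H` in `G`, as a set of subsets of `G`. -/
def essentialCosets (H : Subgroup (PushoutI φ)) : Set (Set (PushoutI φ)) :=
  {S | ∃ c : PushoutI φ, IsEssentialCoset φ H c ∧ S = {g : PushoutI φ | g * c⁻¹ ∈ H}}

end EssentialCosets

/-!
Every element of `H` lies in `ι_A(A)`. By the normal form theorem for amalgamated free products,
a product of at least two letters alternating between the factors and lying outside `ι_A(A)` is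
never in `ι_A(A)`, so every normal decomposition of an element of `H` has length one. Hence
`m = 0` in the definition of an essential coset, which then reads `H·c = H·s` with `s` in a factor.
Conversely, a nontrivial `h ∈ H` is its own normal decomposition and lies in both factors, so
every coset `H·s` with `s` in a factor is essential.
-/

namespace Monoid.PushoutI

variable {ι : Type*} {G : ι → Type*} [∀ i, Group (G i)] {K : Type*} [Group K]
  {φ : ∀ i, K →* G i}

theorem list_prod_notMem_range_base (hφ : ∀ i, Function.Injective (φ i))
    {l : List (Σ i, G i)} (hl : l ≠ []) (hchain : l.IsChain fun p q => p.1 ≠ q.1)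
    (hred : ∀ p ∈ l, p.2 ∉ (φ p.1).range) :
    (l.map fun p => of (φ := φ) p.1 p.2).prod ∉ (base φ).range := by
  intro hbase
  let w : CoprodI.Word G := ⟨l, fun p hp h => hred p hp (h ▸ one_mem _), hchain⟩
  have hw : w = .empty := Reduced.eq_empty_of_mem_range hφ hred <| by
    simpa [w, CoprodI.Word.prod, map_list_prod, Function.comp_def] using hbase
  exact hl (congrArg CoprodI.Word.toList hw)

end Monoid.PushoutI

section EssentialCosets

variable {A : Type} [Group A] {Gf : Bool → Type} [∀ i, Group (Gf i)] {φ : ∀ i : Bool, A →* Gf i}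

theorem inFactor_of_eq {i j : Bool} (h : i = j) (a : Gf i) :
    InFactor φ j (PushoutI.of (φ := φ) i a) := by
  subst h
  exact ⟨a, rfl⟩

theorem inFactor_of_mem_range_base {x : PushoutI φ} (hx : x ∈ (PushoutI.base φ).range)
    (i : Bool) : InFactor φ i x := by
  obtain ⟨a, rfl⟩ := hx
  exact ⟨φ i a, PushoutI.of_apply_eq_base φ i a⟩

theorem isNormalDecomp_singleton {x : PushoutI φ} (hx : x ≠ 1) {i : Bool} (hi : InFactor φ i x) :
    IsNormalDecomp φ x [x] := by
  refine ⟨List.cons_ne_nil _ _, List.prod_singleton, ?_, fun n _ _ _ hy => ?_, by simp⟩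
  · intro y hy
    rw [List.mem_singleton.1 hy]
    cases i
    exacts [⟨hx, Or.inr hi⟩, ⟨hx, Or.inl hi⟩]
  · simp at hy

theorem IsNormalDecomp.length_eq_one_of_mem_range_base (hφ : ∀ i, Function.Injective (φ i))
    {g : PushoutI φ} {L : List (PushoutI φ)} (hL : IsNormalDecomp φ g L)
    (hg : g ∈ (PushoutI.base φ).range) : L.length = 1 := by
  obtain ⟨hne, rfl, hmem, hpair, hbase⟩ := hL
  by_contra hlen
  replace hlen : 1 < L.length := by
    have := List.length_pos_iff.2 hne
    omega
  obtain ⟨l, rfl⟩ :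
      L ∈ Set.range (List.map fun p : Σ i, Gf i => PushoutI.of (φ := φ) p.1 p.2) := by
    rw [Set.range_list_map]
    intro x hx
    rcases (hmem x hx).2 with ⟨a, rfl⟩ | ⟨a, rfl⟩
    exacts [⟨⟨true, a⟩, rfl⟩, ⟨⟨false, a⟩, rfl⟩]
  refine PushoutI.list_prod_notMem_range_base hφ (by simpa using hne) ?_ ?_ hg
  · rw [List.isChain_iff_getElem]
    intro n hn hsame
    have hfac : ∀ i, ¬ (InFactor φ i (PushoutI.of l[n].1 l[n].2) ∧
        InFactor φ i (PushoutI.of l[n + 1].1 l[n + 1].2)) :=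
      Bool.forall_bool.2 (hpair n _ _
        (by simp [List.getElem?_eq_getElem (Nat.lt_of_succ_lt hn)])
        (by simp [List.getElem?_eq_getElem hn])).symm
    exact hfac l[n + 1].1 ⟨inFactor_of_eq hsame _, inFactor_of_eq rfl _⟩
  · rintro p hp ⟨a, ha⟩
    refine hbase hlen _ (List.mem_map_of_mem hp) ⟨a, ?_⟩
    rw [← PushoutI.of_apply_eq_base φ p.1, ha]

end EssentialCosets

theorem essentialCosets_of_le_base_general
    (A : Type) [Group A] (Gf : Bool → Type) [∀ i, Group (Gf i)]
    (φ : ∀ i : Bool, A →* Gf i) (hφ : ∀ i, Function.Injective (φ i))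
    (H : Subgroup (PushoutI φ)) (hne : H ≠ ⊥)
    (hle : H ≤ (PushoutI.base φ).range) :
    ∀ c : PushoutI φ, IsEssentialCoset φ H c ↔
      ∃ s : PushoutI φ,
        (s ∈ (PushoutI.of (φ := φ) true).range ∨ s ∈ (PushoutI.of (φ := φ) false).range) ∧
        c * s⁻¹ ∈ H := by
  intro c
  constructor
  · rintro (hc | ⟨L, m, s, hL, hLH, hm, ⟨i, -, -, -, hs⟩, hcs⟩)
    · exact ⟨1, Or.inl (one_mem _), by simpa using hc⟩
    · obtain rfl : m = 0 := by
        have := hL.length_eq_one_of_mem_range_base hφ (hle hLH)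
        omega
      refine ⟨s, ?_, by simpa using hcs⟩
      cases i
      exacts [Or.inr hs, Or.inl hs]
  · rintro ⟨s, hs, hcs⟩
    obtain ⟨h, hH, hh1⟩ := H.bot_or_exists_ne_one.resolve_left hne
    have hh : ∀ i, InFactor φ i h := inFactor_of_mem_range_base (hle hH)
    obtain ⟨i, hi⟩ : ∃ i, InFactor φ i s := hs.elim (⟨true, ·⟩) (⟨false, ·⟩)
    exact Or.inr ⟨[h], 0, s, by simpa using isNormalDecomp_singleton hh1 (hh true),
      by simpa using hH, by simp, ⟨i, h, rfl, hh i, hi⟩, by simpa using hcs⟩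

/-- Let `H` be a nontrivial subgroup of the amalgam `G = G₁ *_A G₂` of finite groups with
`H ≤ ι_A(A)`. Then the essential right cosets of `H` in `G` are exactly the cosets `H·s`
with `s ∈ ι₁(G₁) ∪ ι₂(G₂)`. -/
theorem essentialCosets_of_le_base
    (A : Type) [Group A] (Gf : Bool → Type) [∀ i, Group (Gf i)] [∀ i, Finite (Gf i)]
    (φ : ∀ i : Bool, A →* Gf i) (hφ : ∀ i, Function.Injective (φ i))
    (H : Subgroup (PushoutI φ)) (hne : H ≠ ⊥)
    (hle : H ≤ (PushoutI.base φ).range) :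
    ∀ c : PushoutI φ, IsEssentialCoset φ H c ↔
      ∃ s : PushoutI φ,
        (s ∈ (PushoutI.of (φ := φ) true).range ∨ s ∈ (PushoutI.of (φ := φ) false).range) ∧
        c * s⁻¹ ∈ H :=
  essentialCosets_of_le_base_general A Gf φ hφ H hne hle
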